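/- arXiv:math/0408285 — 2 statements merged into one kernel-verified Lean document; each statement's English description precedes it below -/
import Mathlib

section
/- Fix n ≥ 2. The family of groups {Γ(ε)}, as ε ranges over all choices of parameters (ε_{ji})_{1 ≤ j < i ≤ n−1} with entries in {0, 1/2}, consists of exactly 2^{(n−1)(n−2)/2} groups which are pairwise non-isomorphic as abstract groups; in particular there exist 2^{(n−1)(n−2)/2} pairwise non-isomorphic torsion-free subgroups of the affine isometry group of ℝ^n of this form. -/
/-- The diagonal matrix `C_i = diag(1,…,1,−1,1,…,1)` with `−1` in the `i`-th place
(indices numbered from `0`). -/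
def Cmat (n i : ℕ) : Matrix (Fin n) (Fin n) ℝ :=
  Matrix.diagonal (fun a => if (a : ℕ) = i then -1 else 1)

/-- The translation vector `c_i = (1/2) e_{i+1} + ∑_{j<i} ε_{ji} e_j`
(indices numbered from `0`). -/
noncomputable def cvec (n : ℕ) (ε : ℕ → ℕ → ℝ) (i : ℕ) : Fin n → ℝ :=
  fun m => if (m : ℕ) = i + 1 then 1 / 2 else if (m : ℕ) < i then ε m i else 0

/-- The generating set of `Γ(ε)` inside the group of affine isometries of `ℝ^n`: the affine
maps `x ↦ C_i x + c_i` for `0 ≤ i ≤ n−2` together with all translations by vectors of `ℤ^n`. -/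
def gammaEpsSet (n : ℕ) (ε : ℕ → ℕ → ℝ) :
    Set (EuclideanSpace ℝ (Fin n) ≃ᵃⁱ[ℝ] EuclideanSpace ℝ (Fin n)) :=
  {γ | (∃ i, i < n - 1 ∧ ∀ x, γ x = (Cmat n i).mulVec x + cvec n ε i) ∨
       (∃ lam : Fin n → ℤ, ∀ x, γ x = fun m => x m + (lam m : ℝ))}

/-- The group `Γ(ε)`, as the subgroup of the group of affine isometries of `ℝ^n` generated
by the maps `x ↦ C_i x + c_i` for `0 ≤ i ≤ n−2` and the translations by `ℤ^n`. -/
noncomputable def GammaEps (n : ℕ) (ε : ℕ → ℕ → ℝ) :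
    Subgroup (EuclideanSpace ℝ (Fin n) ≃ᵃⁱ[ℝ] EuclideanSpace ℝ (Fin n)) :=
  Subgroup.closure (gammaEpsSet n ε)

namespace GammaFam

abbrev E (n : ℕ) := EuclideanSpace ℝ (Fin n)

noncomputable def T {n : ℕ} (v : Fin n → ℝ) : E n ≃ᵃⁱ[ℝ] E n :=
  AffineIsometryEquiv.constVAdd ℝ (E n) (WithLp.toLp 2 v)

variable {n : ℕ}

lemma T_apply (v : Fin n → ℝ) (x : E n) (m : Fin n) : T v x m = x m + v m := by
  show v m + x m = x m + v m; ring

lemma T_inj {v w : Fin n → ℝ} (h : T v = T w) : v = w := by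
  funext m
  have := congrFun (congrArg (fun (γ : E n ≃ᵃⁱ[ℝ] E n) => (γ (0 : E n) : Fin n → ℝ)) h) m
  simpa [T_apply] using this

lemma T_mul (v w : Fin n → ℝ) : T v * T w = T (fun m => v m + w m) := by
  apply AffineIsometryEquiv.ext; intro x; ext m
  show (T v) ((T w) x) m = _
  rw [T_apply, T_apply, T_apply]; ring

lemma T_one : (T (fun _ => 0) : E n ≃ᵃⁱ[ℝ] E n) = 1 := by
  apply AffineIsometryEquiv.ext; intro x; ext m
  rw [T_apply]; simp

lemma T_pow (v : Fin n → ℝ) (k : ℕ) : (T v) ^ k = T (fun m => k * v m) := by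
  induction k with
  | zero => simpa using T_one.symm
  | succ k ih =>
    rw [pow_succ, ih, T_mul]
    congr 1; funext m; push_cast; ring

/-- validity of the parameters -/
def Valid (n : ℕ) (ε : ℕ → ℕ → ℝ) : Prop :=
  ∀ j i, j < i → i < n - 1 → ε j i = 0 ∨ ε j i = 1 / 2

/-- the fractional translation part demanded by the bit vector `t` -/
noncomputable def shift (n : ℕ) (ε : ℕ → ℕ → ℝ) (t : ℕ → ℝ) (m : ℕ) : ℝ :=
  (if m = 0 then 0 else t (m - 1) / 2) + ∑ j ∈ Finset.Ico (m + 1) (n - 1), ε m j * t j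

/-- `γ` has the shape of an element of `Γ(ε)` -/
def IsGood (n : ℕ) (ε : ℕ → ℕ → ℝ) (γ : E n ≃ᵃⁱ[ℝ] E n) : Prop :=
  ∃ t b : ℕ → ℝ, (∀ m, t m = 0 ∨ t m = 1) ∧ (∀ m, n - 1 ≤ m → t m = 0) ∧
    (∀ (x : E n) (m : Fin n), γ x m = (1 - 2 * t (m : ℕ)) * x m + b (m : ℕ)) ∧
    (∀ m : Fin n, ∃ k : ℤ, b (m : ℕ) = shift n ε t (m : ℕ) + k)

section IntHelpers

lemma int_sum {s : Finset ℕ} {f : ℕ → ℝ} (h : ∀ j ∈ s, ∃ k : ℤ, f j = k) :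
    ∃ k : ℤ, ∑ j ∈ s, f j = k := by
  classical
  induction s using Finset.induction with
  | empty => exact ⟨0, by simp⟩
  | @insert a s' hx ih =>
    obtain ⟨k1, hk1⟩ := h a (Finset.mem_insert_self a s')
    obtain ⟨k2, hk2⟩ := ih (fun j hj => h j (Finset.mem_insert_of_mem hj))
    exact ⟨k1 + k2, by rw [Finset.sum_insert hx, hk1, hk2]; push_cast; ring⟩

lemma two_eps_int {ε : ℕ → ℕ → ℝ} (hε : Valid n ε) {m j : ℕ} (h1 : m < j) (h2 : j < n - 1) :
    ∃ k : ℤ, 2 * ε m j = k := by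
  rcases hε m j h1 h2 with h | h <;> rw [h]
  · exact ⟨0, by norm_num⟩
  · exact ⟨1, by norm_num⟩

lemma two_shift_int {ε : ℕ → ℕ → ℝ} (hε : Valid n ε) {t : ℕ → ℝ}
    (ht : ∀ m, t m = 0 ∨ t m = 1) (m : ℕ) :
    ∃ k : ℤ, 2 * shift n ε t m = k := by
  unfold shift
  rw [mul_add, Finset.mul_sum]
  have h1 : ∃ k : ℤ, 2 * (if m = 0 then (0:ℝ) else t (m - 1) / 2) = k := by
    split
    · exact ⟨0, by norm_num⟩
    · rcases ht (m - 1) with h | h <;> rw [h]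
      · exact ⟨0, by norm_num⟩
      · exact ⟨1, by norm_num⟩
  obtain ⟨k1, hk1⟩ := h1
  obtain ⟨k2, hk2⟩ := int_sum (s := Finset.Ico (m + 1) (n - 1)) (f := fun j => 2 * (ε m j * t j))
    (by
      intro j hj
      rw [Finset.mem_Ico] at hj
      obtain ⟨k, hk⟩ := two_eps_int hε hj.1 hj.2
      rcases ht j with h | h
      · exact ⟨0, by simp [h]⟩
      · exact ⟨k, by simp only [h, mul_one]; rw [← hk]⟩)
  refine ⟨k1 + k2, ?_⟩
  push_cast
  rw [← hk1, ← hk2]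

end IntHelpers


section GoodGroup

variable {ε : ℕ → ℕ → ℝ}

lemma shift_zero (ε : ℕ → ℕ → ℝ) (m : ℕ) : shift n ε (fun _ => 0) m = 0 := by
  unfold shift; simp

lemma isGood_one (ε : ℕ → ℕ → ℝ) : IsGood n ε 1 := by
  refine ⟨fun _ => 0, fun _ => 0, fun _ => Or.inl rfl, fun _ _ => rfl, ?_, ?_⟩
  · intro x m
    show x m = (1 - 2 * 0) * x m + 0
    ring
  · intro m
    exact ⟨0, by rw [shift_zero]; norm_num⟩

lemma shift_xor_int (hε : Valid n ε) {t t' t'' : ℕ → ℝ}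
    (ht : ∀ m, t m = 0 ∨ t m = 1) (ht' : ∀ m, t' m = 0 ∨ t' m = 1)
    (ht'' : ∀ j, t'' j = t j + t' j - 2 * t j * t' j) (m : ℕ) :
    ∃ k : ℤ, shift n ε t m + shift n ε t' m - shift n ε t'' m = k := by
  unfold shift
  have h1 : ∃ k : ℤ, (if m = 0 then (0:ℝ) else t (m-1) / 2)
      + (if m = 0 then (0:ℝ) else t' (m-1) / 2)
      - (if m = 0 then (0:ℝ) else t'' (m-1) / 2) = k := by
    split
    · exact ⟨0, by norm_num⟩
    · rw [ht'' (m-1)]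
      rcases ht (m-1) with h | h <;> rcases ht' (m-1) with h' | h' <;> rw [h, h']
      exacts [⟨0, by norm_num⟩, ⟨0, by norm_num⟩, ⟨0, by norm_num⟩, ⟨1, by norm_num⟩]
  obtain ⟨k1, hk1⟩ := h1
  obtain ⟨k2, hk2⟩ := int_sum (s := Finset.Ico (m + 1) (n - 1))
    (f := fun j => ε m j * t j + ε m j * t' j - ε m j * t'' j)
    (by
      intro j hj
      rw [Finset.mem_Ico] at hj
      obtain ⟨k, hk⟩ := two_eps_int hε hj.1 hj.2
      beta_reduce
      rcases ht j with h | h <;> rcases ht' j with h' | h'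
      · exact ⟨0, by rw [ht'' j, h, h']; norm_num⟩
      · exact ⟨0, by rw [ht'' j, h, h']; norm_num⟩
      · exact ⟨0, by rw [ht'' j, h, h']; norm_num⟩
      · refine ⟨k, ?_⟩
        rw [ht'' j, h, h', ← hk]
        ring)
  refine ⟨k1 + k2, ?_⟩
  push_cast
  rw [← hk1, ← hk2, Finset.sum_sub_distrib, Finset.sum_add_distrib]
  ring

lemma isGood_mul (hε : Valid n ε) {γ δ : E n ≃ᵃⁱ[ℝ] E n}
    (hγ : IsGood n ε γ) (hδ : IsGood n ε δ) : IsGood n ε (γ * δ) := by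
  obtain ⟨t, b, ht, htv, hf, hs⟩ := hγ
  obtain ⟨t', b', ht', htv', hf', hs'⟩ := hδ
  have ht'' : ∀ j, (fun j => t j + t' j - 2 * t j * t' j) j
      = t j + t' j - 2 * t j * t' j := fun _ => rfl
  refine ⟨fun j => t j + t' j - 2 * t j * t' j,
          fun j => (1 - 2 * t j) * b' j + b j, ?_, ?_, ?_, ?_⟩
  · intro m
    rw [ht'' m]
    rcases ht m with h | h <;> rcases ht' m with h' | h' <;> rw [h, h'] <;>
      [left; right; right; left] <;> ring
  · intro m hm
    rw [ht'' m, htv m hm, htv' m hm]; ring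
  · intro x m
    show γ (δ x) m = _
    rw [hf (δ x) m, hf' x m, ht'' (m : ℕ)]
    ring
  · intro m
    obtain ⟨k1, hk1⟩ := hs m
    obtain ⟨k2, hk2⟩ := hs' m
    obtain ⟨k3, hk3⟩ := shift_xor_int hε ht ht' ht'' (m : ℕ)
    obtain ⟨k4, hk4⟩ := two_shift_int hε ht' (m : ℕ)
    rcases ht (m : ℕ) with h | h
    · refine ⟨k1 + k2 + k3, ?_⟩
      beta_reduce
      rw [hk1, hk2, h]
      push_cast
      linarith
    · refine ⟨k1 - k2 - k4 + k3, ?_⟩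
      beta_reduce
      rw [hk1, hk2, h]
      push_cast
      linarith

lemma isGood_inv (hε : Valid n ε) {γ : E n ≃ᵃⁱ[ℝ] E n}
    (hγ : IsGood n ε γ) : IsGood n ε γ⁻¹ := by
  obtain ⟨t, b, ht, htv, hf, hs⟩ := hγ
  refine ⟨t, fun j => -((1 - 2 * t j) * b j), ht, htv, ?_, ?_⟩
  · intro x m
    have key : γ (WithLp.toLp 2 (fun j : Fin n => (1 - 2 * t (j:ℕ)) * (x j - b (j:ℕ))) : E n) = x := by
      ext j
      rw [hf _ j]
      show (1 - 2 * t (j:ℕ)) * ((1 - 2 * t (j:ℕ)) * (x j - b (j:ℕ))) + b (j:ℕ) = x j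
      rcases ht (j : ℕ) with h | h <;> rw [h] <;> ring
    have h2 : γ⁻¹ x = (WithLp.toLp 2 (fun j : Fin n => (1 - 2 * t (j:ℕ)) * (x j - b (j:ℕ))) : E n) := by
      conv_lhs => rw [← key]
      exact γ.symm_apply_apply _
    rw [h2]
    show (1 - 2 * t (m:ℕ)) * (x m - b (m:ℕ)) = _
    ring
  · intro m
    obtain ⟨k1, hk1⟩ := hs m
    obtain ⟨k2, hk2⟩ := two_shift_int hε ht (m : ℕ)
    rcases ht (m : ℕ) with h | h
    · refine ⟨-k1 - k2, ?_⟩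
      beta_reduce
      rw [hk1, h]
      push_cast
      linarith
    · refine ⟨k1, ?_⟩
      beta_reduce
      rw [hk1, h]
      push_cast
      linarith

/-- The subgroup of all good elements. -/
noncomputable def GoodSub (n : ℕ) (ε : ℕ → ℕ → ℝ) (hε : Valid n ε) :
    Subgroup (E n ≃ᵃⁱ[ℝ] E n) where
  carrier := {γ | IsGood n ε γ}
  one_mem' := isGood_one ε
  mul_mem' := fun h1 h2 => isGood_mul hε h1 h2
  inv_mem' := fun h => isGood_inv hε h

end GoodGroup


section Generators

variable {ε : ℕ → ℕ → ℝ}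

noncomputable def signLIE (n i : ℕ) : E n ≃ₗᵢ[ℝ] E n :=
  LinearIsometryEquiv.piLpCongrRight 2 (fun m : Fin n =>
    if (m : ℕ) = i then LinearIsometryEquiv.neg ℝ else LinearIsometryEquiv.refl ℝ ℝ)

noncomputable def gen (n : ℕ) (ε : ℕ → ℕ → ℝ) (i : ℕ) : E n ≃ᵃⁱ[ℝ] E n :=
  (signLIE n i).toAffineIsometryEquiv.trans
    (AffineIsometryEquiv.constVAdd ℝ (E n) (WithLp.toLp 2 (cvec n ε i)))

lemma gen_apply (i : ℕ) (x : E n) (m : Fin n) :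
    gen n ε i x m = (if (m : ℕ) = i then -1 else 1) * x m + cvec n ε i m := by
  show cvec n ε i m + signLIE n i x m = _
  have : signLIE n i x m = (if (m : ℕ) = i then -1 else 1) * x m := by
    show (LinearIsometryEquiv.piLpCongrRight 2 _) x m = _
    rw [LinearIsometryEquiv.piLpCongrRight_apply]
    split <;> rename_i h <;> simp [h]
  rw [this]; ring

lemma gen_spec (i : ℕ) (x : E n) : gen n ε i x = (Cmat n i).mulVec x + cvec n ε i := by
  funext m
  rw [gen_apply]
  show _ = (Cmat n i).mulVec x m + cvec n ε i m
  rw [Cmat, Matrix.mulVec_diagonal]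

lemma gen_mem (i : ℕ) (hi : i < n - 1) : gen n ε i ∈ GammaEps n ε :=
  Subgroup.subset_closure (Or.inl ⟨i, hi, gen_spec i⟩)

noncomputable def Tz (n : ℕ) (lam : Fin n → ℤ) : E n ≃ᵃⁱ[ℝ] E n :=
  T (fun m => (lam m : ℝ))

lemma Tz_apply (lam : Fin n → ℤ) (x : E n) (m : Fin n) :
    Tz n lam x m = x m + lam m := T_apply _ x m

lemma Tz_mem (lam : Fin n → ℤ) : Tz n lam ∈ GammaEps n ε :=
  Subgroup.subset_closure (Or.inr ⟨lam, fun x => funext fun m => T_apply _ x m⟩)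

lemma Tz_inj {lam mu : Fin n → ℤ} (h : Tz n lam = Tz n mu) : lam = mu := by
  have := T_inj h
  funext m
  exact_mod_cast congrFun this m

/-- the indicator bit vector of the generator `i` -/
def indic (i : ℕ) : ℕ → ℝ := fun j => if j = i then 1 else 0

lemma shift_indicator (ε : ℕ → ℕ → ℝ) {i : ℕ} (hi : i < n - 1) (m : ℕ) :
    shift n ε (indic i) m = if m = i + 1 then 1/2 else if m < i then ε m i else 0 := by
  unfold shift indic
  have hsum : ∑ j ∈ Finset.Ico (m+1) (n-1), ε m j * (if j = i then (1:ℝ) else 0)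
      = if i ∈ Finset.Ico (m+1) (n-1) then ε m i else 0 := by
    simp only [mul_ite, mul_one, mul_zero]
    exact Finset.sum_ite_eq' (Finset.Ico (m+1) (n-1)) i (fun j => ε m j)
  beta_reduce
  rw [hsum]
  simp only [Finset.mem_Ico]
  by_cases h1 : m = i + 1
  · have h2 : ¬ (m + 1 ≤ i ∧ i < n - 1) := by omega
    have h3 : ¬ m = 0 := by omega
    have h4 : m - 1 = i := by omega
    rw [if_neg h3, if_pos h4, if_neg h2, if_pos h1]
    norm_num
  · by_cases h5 : m < i
    · have h2 : (m + 1 ≤ i ∧ i < n - 1) := by omega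
      by_cases h3 : m = 0
      · rw [if_pos h3, if_pos h2, if_neg h1, if_pos h5]
        norm_num
      · have h4 : ¬ (m - 1 = i) := by omega
        rw [if_neg h3, if_neg h4, if_pos h2, if_neg h1, if_pos h5]
        norm_num
    · have h2 : ¬ (m + 1 ≤ i ∧ i < n - 1) := by omega
      rw [if_neg h2, if_neg h1, if_neg h5]
      by_cases h3 : m = 0
      · rw [if_pos h3]; norm_num
      · have h4 : ¬ (m - 1 = i) := by omega
        rw [if_neg h3, if_neg h4]
        norm_num

lemma isGood_of_mem_set {γ : E n ≃ᵃⁱ[ℝ] E n} (hγ : γ ∈ gammaEpsSet n ε) :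
    IsGood n ε γ := by
  rcases hγ with ⟨i, hi, hfor⟩ | ⟨lam, hfor⟩
  · refine ⟨indic i, fun j => if h : j < n then cvec n ε i ⟨j, h⟩ else 0, ?_, ?_, ?_, ?_⟩
    · intro m; unfold indic; split <;> simp
    · intro m hm; unfold indic; split <;> [omega; rfl]
    · intro x m
      have h1 := congrFun (hfor x) m
      have h2 : ((Cmat n i).mulVec x + cvec n ε i) m = (Cmat n i).mulVec x m + cvec n ε i m := rfl
      rw [h1, h2, Cmat, Matrix.mulVec_diagonal]
      beta_reduce
      rw [dif_pos m.isLt]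
      unfold indic
      have e1 : (if ((m:ℕ)) = i then (-1:ℝ) else 1) = 1 - 2 * (if ((m:ℕ)) = i then (1:ℝ) else 0) := by
        split <;> norm_num
      have e2 : (⟨(m : ℕ), m.isLt⟩ : Fin n) = m := Fin.eta m m.isLt
      rw [e1, e2]
    · intro m
      refine ⟨0, ?_⟩
      beta_reduce
      rw [dif_pos m.isLt, shift_indicator ε hi]
      push_cast
      rw [add_zero]
      rfl
  · refine ⟨fun _ => 0, fun j => if h : j < n then (lam ⟨j, h⟩ : ℝ) else 0, fun _ => Or.inl rfl,
      fun _ _ => rfl, ?_, ?_⟩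
    · intro x m
      have h1 := congrFun (hfor x) m
      rw [h1]
      beta_reduce
      rw [dif_pos m.isLt]
      have : (⟨(m : ℕ), m.isLt⟩ : Fin n) = m := Fin.eta m m.isLt
      rw [this]
      ring
    · intro m
      refine ⟨lam m, ?_⟩
      beta_reduce
      rw [dif_pos m.isLt, shift_zero]
      have : (⟨(m : ℕ), m.isLt⟩ : Fin n) = m := Fin.eta m m.isLt
      rw [this, zero_add]

lemma isGood_of_mem (hε : Valid n ε) {γ : E n ≃ᵃⁱ[ℝ] E n} (hγ : γ ∈ GammaEps n ε) :
    IsGood n ε γ := by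
  have : GammaEps n ε ≤ GoodSub n ε hε :=
    (Subgroup.closure_le _).2 (fun γ hγ => isGood_of_mem_set hγ)
  exact this hγ

/-- the parameters of a good element are unique (at relevant indices) -/
lemma good_param_unique {γ : E n ≃ᵃⁱ[ℝ] E n} {t b t' b' : ℕ → ℝ}
    (hf : ∀ (x : E n) (m : Fin n), γ x m = (1 - 2 * t (m : ℕ)) * x m + b (m : ℕ))
    (hf' : ∀ (x : E n) (m : Fin n), γ x m = (1 - 2 * t' (m : ℕ)) * x m + b' (m : ℕ))
    (m : Fin n) : t (m : ℕ) = t' (m : ℕ) ∧ b (m : ℕ) = b' (m : ℕ) := by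
  have h0 : b (m : ℕ) = b' (m : ℕ) := by
    have h1 := hf 0 m
    have h2 := hf' 0 m
    have h3 : (0 : E n) m = 0 := rfl
    rw [h3, mul_zero, zero_add] at h1 h2
    exact h1.symm.trans h2
  refine ⟨?_, h0⟩
  have h1 := hf (EuclideanSpace.single m 1) m
  have h2 := hf' (EuclideanSpace.single m 1) m
  rw [EuclideanSpace.single_apply, if_pos rfl, mul_one] at h1 h2
  rw [h0] at h1
  have h4 := h1.symm.trans h2
  linarith

end Generators


section TorsionFree

variable {ε : ℕ → ℕ → ℝ}

lemma not_finOrder_T {v : Fin n → ℝ} (hv : ∃ m, v m ≠ 0) : ¬ IsOfFinOrder (T v) := by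
  intro h
  obtain ⟨k, hk, hk1⟩ := isOfFinOrder_iff_pow_eq_one.1 h
  rw [T_pow] at hk1
  obtain ⟨m, hm⟩ := hv
  have h2 := congrFun (congrArg (fun (γ : E n ≃ᵃⁱ[ℝ] E n) => (γ (0:E n) : Fin n → ℝ)) hk1) m
  simp only [T_apply] at h2
  have h3 : (0 : E n) m + k * v m = (0 : E n) m := h2
  have h4 : (k : ℝ) ≠ 0 := Nat.cast_ne_zero.2 hk.ne'
  have h5 : (k : ℝ) * v m = 0 := by linarith
  exact hm (by
    rcases mul_eq_zero.1 h5 with h | h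
    · exact absurd h h4
    · exact h)

lemma gamma_torsionfree (hε : Valid n ε) (γ : E n ≃ᵃⁱ[ℝ] E n) (hγ : γ ∈ GammaEps n ε)
    (hne : γ ≠ 1) : ¬ IsOfFinOrder γ := by
  classical
  intro hfin
  obtain ⟨t, b, ht, htv, hf, hs⟩ := isGood_of_mem hε hγ
  by_cases hz : ∀ m : Fin n, t (m : ℕ) = 0
  · have heq : γ = T (fun m => b (m : ℕ)) := by
      apply AffineIsometryEquiv.ext; intro x; ext m
      rw [hf x m, hz m, T_apply]; ring
    by_cases hb : ∃ m : Fin n, b (m : ℕ) ≠ 0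
    · exact not_finOrder_T hb (heq ▸ hfin)
    · push_neg at hb
      apply hne
      rw [heq]
      have : (fun m : Fin n => b (m : ℕ)) = (fun _ => 0 : Fin n → ℝ) := funext hb
      rw [this, T_one]
  · push_neg at hz
    obtain ⟨m0, hm0⟩ := hz
    have hPm0 : t (m0 : ℕ) = 1 := (ht _).resolve_left hm0
    have hi : t (Nat.findGreatest (fun i => t i = 1) n) = 1 :=
      Nat.findGreatest_spec (P := fun i => t i = 1) (m := (m0 : ℕ)) (le_of_lt m0.isLt) hPm0
    set i := Nat.findGreatest (fun i => t i = 1) n with hidef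
    have hilt : i < n - 1 := by
      by_contra hcon
      push_neg at hcon
      rw [htv i hcon] at hi
      norm_num at hi
    have hmax : ∀ j, i < j → t j = 0 := by
      intro j hj
      by_cases hjn : j ≤ n
      · have := Nat.findGreatest_is_greatest hj hjn
        exact (ht j).resolve_right this
      · exact htv j (by omega)
    have hn1 : i + 1 < n := by omega
    have hsq : γ * γ = T (fun m : Fin n => 2 * b (m : ℕ) - 2 * t (m : ℕ) * b (m : ℕ)) := by
      apply AffineIsometryEquiv.ext; intro x; ext m
      show γ (γ x) m = _
      rw [T_apply]
      beta_reduce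
      rw [hf (γ x) m, hf x m]
      rcases ht (m : ℕ) with h | h <;> rw [h] <;> ring
    have hvm1 : 2 * b ((⟨i+1, hn1⟩ : Fin n) : ℕ) - 2 * t ((⟨i+1, hn1⟩ : Fin n) : ℕ)
        * b ((⟨i+1, hn1⟩ : Fin n) : ℕ) ≠ 0 := by
      obtain ⟨k, hk⟩ := hs ⟨i+1, hn1⟩
      have hval : ((⟨i+1, hn1⟩ : Fin n) : ℕ) = i + 1 := rfl
      rw [hval] at hk ⊢
      have htm1 : t (i + 1) = 0 := hmax (i+1) (by omega)
      have hsh : shift n ε t (i + 1) = 1 / 2 := by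
        unfold shift
        rw [if_neg (by omega : ¬ i + 1 = 0)]
        have e1 : i + 1 - 1 = i := by omega
        rw [e1, hi]
        rw [Finset.sum_eq_zero]
        · norm_num
        · intro j hj
          rw [Finset.mem_Ico] at hj
          rw [hmax j (by omega)]
          ring
      rw [htm1, hk, hsh]
      intro hcon
      have hc2 : (2 * k : ℝ) = -1 := by linarith
      have hc3 : (2 * k : ℤ) = -1 := by exact_mod_cast hc2
      omega
    have hfin2 : IsOfFinOrder (γ * γ) := by
      have := hfin.pow (n := 2)
      rwa [pow_two] at this
    exact not_finOrder_T ⟨⟨i+1, hn1⟩, hvm1⟩ (hsq ▸ hfin2)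

lemma gamma_torsionfree_sub (hε : Valid n ε) (γ : ↥(GammaEps n ε)) (hne : γ ≠ 1) :
    ¬ IsOfFinOrder γ := by
  intro h
  have h2 : IsOfFinOrder (γ : E n ≃ᵃⁱ[ℝ] E n) := by
    obtain ⟨k, hk, he⟩ := isOfFinOrder_iff_pow_eq_one.1 h
    refine isOfFinOrder_iff_pow_eq_one.2 ⟨k, hk, ?_⟩
    have := congrArg (fun x : ↥(GammaEps n ε) => (x : E n ≃ᵃⁱ[ℝ] E n)) he
    simpa using this
  exact gamma_torsionfree hε _ γ.2 (fun hh => hne (Subtype.ext hh)) h2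

end TorsionFree


section ConjLemmas

variable {ε : ℕ → ℕ → ℝ}

lemma inv_formula {γ : E n ≃ᵃⁱ[ℝ] E n} {t b : ℕ → ℝ} (ht : ∀ m, t m = 0 ∨ t m = 1)
    (hf : ∀ (x : E n) (m : Fin n), γ x m = (1 - 2 * t (m:ℕ)) * x m + b (m:ℕ))
    (x : E n) (m : Fin n) : γ⁻¹ x m = (1 - 2 * t (m:ℕ)) * (x m - b (m:ℕ)) := by
  have key : γ (WithLp.toLp 2 (fun j : Fin n => (1 - 2 * t (j:ℕ)) * (x j - b (j:ℕ))) : E n) = x := by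
    ext j
    rw [hf _ j]
    show (1 - 2 * t (j:ℕ)) * ((1 - 2 * t (j:ℕ)) * (x j - b (j:ℕ))) + b (j:ℕ) = x j
    rcases ht (j : ℕ) with h | h <;> rw [h] <;> ring
  have h2 : γ⁻¹ x = (WithLp.toLp 2 (fun j : Fin n => (1 - 2 * t (j:ℕ)) * (x j - b (j:ℕ))) : E n) := by
    conv_lhs => rw [← key]
    exact γ.symm_apply_apply _
  rw [h2]

lemma conj_Tz {γ : E n ≃ᵃⁱ[ℝ] E n} {t b : ℕ → ℝ} (ht : ∀ m, t m = 0 ∨ t m = 1)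
    (hf : ∀ (x : E n) (m : Fin n), γ x m = (1 - 2 * t (m:ℕ)) * x m + b (m:ℕ))
    (lam : Fin n → ℤ) :
    γ * Tz n lam * γ⁻¹ = Tz n (fun m => if t (m:ℕ) = 1 then -lam m else lam m) := by
  classical
  apply AffineIsometryEquiv.ext; intro x; ext m
  show γ (Tz n lam (γ⁻¹ x)) m = _
  rw [Tz_apply, hf _ m, Tz_apply, inv_formula ht hf x m]
  rcases ht (m : ℕ) with h | h
  · rw [h, if_neg (show ¬ (0:ℝ) = 1 by norm_num)]
    ring
  · rw [h, if_pos rfl]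
    push_cast
    ring

lemma Tz_inv (lam : Fin n → ℤ) : (Tz n lam)⁻¹ = Tz n (-lam) := by
  apply inv_eq_of_mul_eq_one_right
  show T _ * T _ = 1
  rw [T_mul]
  rw [show (fun m : Fin n => (lam m : ℝ) + ((-lam) m : ℝ)) = fun _ => 0 by
    funext m; simp]
  exact T_one

lemma Tz_mul (lam mu : Fin n → ℤ) : Tz n lam * Tz n mu = Tz n (lam + mu) := by
  show T _ * T _ = T _
  rw [T_mul]
  congr 1; funext m; simp

/-- the square of a generator is an integer translation -/
lemma gen_sq (hε : Valid n ε) {i : ℕ} (hi : i < n - 1) :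
    gen n ε i * gen n ε i = Tz n (fun m =>
      if (m:ℕ) = i + 1 then 1 else if ((m:ℕ) < i ∧ ε (m:ℕ) i = 1/2) then 1 else 0) := by
  classical
  apply AffineIsometryEquiv.ext; intro x; ext m
  show gen n ε i (gen n ε i x) m = _
  rw [Tz_apply, gen_apply, gen_apply]
  beta_reduce
  by_cases h1 : (m : ℕ) = i
  · rw [if_pos h1]
    have h2 : ¬ ((m:ℕ) = i + 1) := by omega
    have h3 : ¬ ((m:ℕ) < i ∧ ε (m:ℕ) i = 1/2) := by
      rintro ⟨h4, _⟩; omega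
    rw [if_neg h2, if_neg h3]
    push_cast
    ring
  · rw [if_neg h1]
    unfold cvec
    by_cases h2 : (m : ℕ) = i + 1
    · rw [if_pos h2, if_pos h2]
      push_cast
      ring
    · rw [if_neg h2, if_neg h2]
      by_cases h3 : (m : ℕ) < i
      · rw [if_pos h3]
        rcases hε (m:ℕ) i h3 hi with h4 | h4
        · have h5 : ¬ ((m:ℕ) < i ∧ ε (m:ℕ) i = 1/2) := by
            rintro ⟨_, h6⟩; rw [h4] at h6; norm_num at h6
          rw [if_neg h5, h4]
          push_cast
          ring
        · have h5 : ((m:ℕ) < i ∧ ε (m:ℕ) i = 1/2) := ⟨h3, h4⟩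
          rw [if_pos h5, h4]
          push_cast
          ring
      · rw [if_neg h3]
        have h5 : ¬ ((m:ℕ) < i ∧ ε (m:ℕ) i = 1/2) := by
          rintro ⟨h6, _⟩; exact h3 h6
        rw [if_neg h5]
        push_cast
        ring

end ConjLemmas


section TransMap

variable {ε ε' : ℕ → ℕ → ℝ}

lemma exists_trans_image (hε : Valid n ε) (hε' : Valid n ε')
    (F : ↥(GammaEps n ε) ≃* ↥(GammaEps n ε')) (lam : Fin n → ℤ) :
    ∃ mu : Fin n → ℤ,
      ((F ⟨Tz n lam, Tz_mem lam⟩ : ↥(GammaEps n ε')) : E n ≃ᵃⁱ[ℝ] E n) = Tz n mu := by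
  classical
  set g : ↥(GammaEps n ε') := F ⟨Tz n lam, Tz_mem lam⟩ with hg
  set g' : E n ≃ᵃⁱ[ℝ] E n := (g : E n ≃ᵃⁱ[ℝ] E n) with hg'
  obtain ⟨t, b, ht, htv, hf, hs⟩ := isGood_of_mem hε' g.2
  have hz : ∀ m : Fin n, t (m:ℕ) = 0 := by
    intro k0
    by_contra hk0
    have htk : t (k0:ℕ) = 1 := (ht _).resolve_left hk0
    set e : Fin n → ℤ := fun j => if k0 = j then 1 else 0 with he
    set τ : ↥(GammaEps n ε') := ⟨Tz n e, Tz_mem e⟩ with hτ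
    set γ0 : ↥(GammaEps n ε) := F.symm τ with hγ0
    obtain ⟨t0, b0, ht0, htv0, hf0, hs0⟩ := isGood_of_mem hε γ0.2
    have hconj : γ0 * (⟨Tz n lam, Tz_mem lam⟩ : ↥(GammaEps n ε)) * γ0⁻¹
        = ⟨Tz n (fun m => if t0 (m:ℕ) = 1 then -lam m else lam m), Tz_mem _⟩ := by
      apply Subtype.ext
      show (γ0 : E n ≃ᵃⁱ[ℝ] E n) * Tz n lam * (γ0 : E n ≃ᵃⁱ[ℝ] E n)⁻¹ = _
      exact conj_Tz ht0 hf0 lam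
    have hcomm : (⟨Tz n lam, Tz_mem lam⟩ : ↥(GammaEps n ε)) * (γ0 * ⟨Tz n lam, Tz_mem lam⟩ * γ0⁻¹)
        = (γ0 * ⟨Tz n lam, Tz_mem lam⟩ * γ0⁻¹) * ⟨Tz n lam, Tz_mem lam⟩ := by
      rw [hconj]
      apply Subtype.ext
      show Tz n lam * Tz n (fun m => if t0 (m:ℕ) = 1 then -lam m else lam m) = Tz n (fun m => if t0 (m:ℕ) = 1 then -lam m else lam m) * Tz n lam
      rw [Tz_mul, Tz_mul, add_comm]
    have h2 : g * (τ * g * τ⁻¹) = (τ * g * τ⁻¹) * g := by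
      have h2' := congrArg F hcomm
      simp only [map_mul, map_inv, hγ0, MulEquiv.apply_symm_apply, ← hg] at h2'
      exact h2'
    have hAmb : g' * (Tz n e * g' * (Tz n e)⁻¹) = (Tz n e * g' * (Tz n e)⁻¹) * g' := by
      have h3 := congrArg (fun y : ↥(GammaEps n ε') => (y : E n ≃ᵃⁱ[ℝ] E n)) h2
      simpa using h3
    rw [Tz_inv] at hAmb
    have hev := congrFun (congrArg
      (fun (γ : E n ≃ᵃⁱ[ℝ] E n) => (γ (0:E n) : Fin n → ℝ)) hAmb) k0
    have hL : (g' (Tz n e (g' (Tz n (-e) (0:E n)))) k0 : ℝ) = -2 := by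
      rw [hf _ k0, Tz_apply, hf _ k0, Tz_apply, htk]
      have he1 : ((-e) k0 : ℝ) = -1 := by simp [he]
      have he2 : ((e) k0 : ℝ) = 1 := by simp [he]
      rw [he1, he2]
      have h0 : (0 : E n) k0 = 0 := rfl
      rw [h0]
      ring
    have hR : (Tz n e (g' (Tz n (-e) (g' (0:E n)))) k0 : ℝ) = 2 := by
      rw [Tz_apply, hf _ k0, Tz_apply, hf _ k0, htk]
      have he1 : ((-e) k0 : ℝ) = -1 := by simp [he]
      have he2 : ((e) k0 : ℝ) = 1 := by simp [he]
      rw [he1, he2]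
      have h0 : (0 : E n) k0 = 0 := rfl
      rw [h0]
      ring
    have : (-2 : ℝ) = 2 := by
      rw [← hL, ← hR]
      exact hev
    norm_num at this
  have hshift0 : ∀ m : Fin n, shift n ε' t (m:ℕ) = 0 := by
    intro m
    have hmlt := m.isLt
    have ht' : ∀ j, j < n → t j = 0 := fun j hj => hz ⟨j, hj⟩
    unfold shift
    rw [Finset.sum_eq_zero, add_zero]
    · split
      · rfl
      · rw [ht' ((m:ℕ)-1) (by omega)]
        norm_num
    · intro j hj
      rw [Finset.mem_Ico] at hj
      rw [ht' j (by omega)]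
      ring
  refine ⟨fun m => Classical.choose (hs m), ?_⟩
  apply AffineIsometryEquiv.ext; intro x; ext m
  rw [hf x m, Tz_apply, hz m]
  have hk := Classical.choose_spec (hs m)
  beta_reduce
  linear_combination hk + hshift0 m

noncomputable def transMap (hε : Valid n ε) (hε' : Valid n ε')
    (F : ↥(GammaEps n ε) ≃* ↥(GammaEps n ε')) (lam : Fin n → ℤ) : Fin n → ℤ :=
  Classical.choose (exists_trans_image hε hε' F lam)

lemma transMap_spec (hε : Valid n ε) (hε' : Valid n ε')
    (F : ↥(GammaEps n ε) ≃* ↥(GammaEps n ε')) (lam : Fin n → ℤ) :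
    ((F ⟨Tz n lam, Tz_mem lam⟩ : ↥(GammaEps n ε')) : E n ≃ᵃⁱ[ℝ] E n)
      = Tz n (transMap hε hε' F lam) :=
  Classical.choose_spec (exists_trans_image hε hε' F lam)

lemma transMap_add (hε : Valid n ε) (hε' : Valid n ε')
    (F : ↥(GammaEps n ε) ≃* ↥(GammaEps n ε')) (lam mu : Fin n → ℤ) :
    transMap hε hε' F (lam + mu) = transMap hε hε' F lam + transMap hε hε' F mu := by
  apply Tz_inj (n := n)
  rw [← Tz_mul]
  rw [← transMap_spec hε hε' F, ← transMap_spec hε hε' F, ← transMap_spec hε hε' F]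
  have h1 : (⟨Tz n (lam + mu), Tz_mem _⟩ : ↥(GammaEps n ε))
      = ⟨Tz n lam, Tz_mem lam⟩ * ⟨Tz n mu, Tz_mem mu⟩ := by
    apply Subtype.ext
    show Tz n (lam + mu) = Tz n lam * Tz n mu
    rw [Tz_mul]
  rw [h1, map_mul]
  rfl

lemma transMap_symm (hε : Valid n ε) (hε' : Valid n ε')
    (F : ↥(GammaEps n ε) ≃* ↥(GammaEps n ε')) (lam : Fin n → ℤ) :
    transMap hε' hε F.symm (transMap hε hε' F lam) = lam := by
  apply Tz_inj (n := n)
  symm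
  have h1 : (⟨Tz n (transMap hε hε' F lam), Tz_mem _⟩ : ↥(GammaEps n ε'))
      = F ⟨Tz n lam, Tz_mem lam⟩ :=
    Subtype.ext (transMap_spec hε hε' F lam).symm
  have h2 := transMap_spec hε' hε F.symm (transMap hε hε' F lam)
  rw [h1, MulEquiv.symm_apply_apply] at h2
  exact h2

lemma transMap_zero (hε : Valid n ε) (hε' : Valid n ε')
    (F : ↥(GammaEps n ε) ≃* ↥(GammaEps n ε')) : transMap hε hε' F 0 = 0 := by
  have h := transMap_add hε hε' F 0 0
  rw [add_zero] at h
  exact (left_eq_add.1 h)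

lemma transMap_neg (hε : Valid n ε) (hε' : Valid n ε')
    (F : ↥(GammaEps n ε) ≃* ↥(GammaEps n ε')) (lam : Fin n → ℤ) :
    transMap hε hε' F (-lam) = -(transMap hε hε' F lam) := by
  have h := transMap_add hε hε' F lam (-lam)
  rw [add_neg_cancel, transMap_zero] at h
  exact eq_neg_of_add_eq_zero_right h.symm

lemma transMap_expand (hε : Valid n ε) (hε' : Valid n ε')
    (F : ↥(GammaEps n ε) ≃* ↥(GammaEps n ε')) (lam : Fin n → ℤ) (k : Fin n) :
    transMap hε hε' F lam k
      = ∑ m : Fin n, lam m * transMap hε hε' F (fun j => if m = j then 1 else 0) k := by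
  classical
  set φ : (Fin n → ℤ) →+ (Fin n → ℤ) :=
    AddMonoidHom.mk' (transMap hε hε' F) (transMap_add hε hε' F) with hφ
  have h1 : lam = ∑ m : Fin n, lam m • (fun j => if m = j then (1:ℤ) else 0) :=
    pi_eq_sum_univ lam
  have h2 : transMap hε hε' F lam
      = ∑ m : Fin n, lam m • transMap hε hε' F (fun j => if m = j then (1:ℤ) else 0) := by
    show φ lam = _
    conv_lhs => rw [h1]
    rw [map_sum]
    congr 1
    funext m
    rw [map_zsmul]
    rfl
  rw [h2, Finset.sum_apply]
  simp

end TransMap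


section Equivariance

variable {ε ε' : ℕ → ℕ → ℝ}

lemma indic_bits (i : ℕ) : ∀ m, indic i m = 0 ∨ indic i m = 1 := by
  intro m; unfold indic; split <;> simp

lemma gen_formula (i : ℕ) (x : E n) (m : Fin n) :
    gen n ε i x m = (1 - 2 * indic i (m:ℕ)) * x m
      + (fun j => if h : j < n then cvec n ε i ⟨j, h⟩ else 0) (m:ℕ) := by
  rw [gen_apply]
  beta_reduce
  rw [dif_pos m.isLt]
  have e2 : (⟨(m : ℕ), m.isLt⟩ : Fin n) = m := Fin.eta m m.isLt
  rw [e2]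
  congr 2
  unfold indic
  split <;> norm_num

lemma transMap_conj (hε : Valid n ε) (hε' : Valid n ε')
    (F : ↥(GammaEps n ε) ≃* ↥(GammaEps n ε')) {i : ℕ} (hi : i < n - 1) {t b : ℕ → ℝ}
    (ht : ∀ m, t m = 0 ∨ t m = 1)
    (hf : ∀ (x : E n) (m : Fin n),
      ((F ⟨gen n ε i, gen_mem i hi⟩ : ↥(GammaEps n ε')) : E n ≃ᵃⁱ[ℝ] E n) x m
        = (1 - 2 * t (m:ℕ)) * x m + b (m:ℕ))
    (lam : Fin n → ℤ) :
    transMap hε hε' F (fun m => if (m:ℕ) = i then -lam m else lam m)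
      = fun m : Fin n => if t (m:ℕ) = 1 then -(transMap hε hε' F lam m)
                 else transMap hε hε' F lam m := by
  classical
  apply Tz_inj (n := n)
  rw [← transMap_spec hε hε' F]
  have hgen : (⟨gen n ε i, gen_mem i hi⟩ : ↥(GammaEps n ε)) * ⟨Tz n lam, Tz_mem lam⟩
        * (⟨gen n ε i, gen_mem i hi⟩ : ↥(GammaEps n ε))⁻¹
      = ⟨Tz n (fun m => if (m:ℕ) = i then -lam m else lam m), Tz_mem _⟩ := by
    apply Subtype.ext
    show gen n ε i * Tz n lam * (gen n ε i)⁻¹ = _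
    rw [conj_Tz (γ := gen n ε i) (t := indic i)
      (b := fun j => if h : j < n then cvec n ε i ⟨j, h⟩ else 0)
      (indic_bits i) (gen_formula i) lam]
    congr 1
    funext m
    unfold indic
    by_cases h : (m : ℕ) = i
    · rw [if_pos h, if_pos h, if_pos rfl]
    · rw [if_neg h, if_neg h, if_neg (show ¬ (0:ℝ) = 1 by norm_num)]
  have h2 := congrArg (fun y : ↥(GammaEps n ε) =>
    ((F y : ↥(GammaEps n ε')) : E n ≃ᵃⁱ[ℝ] E n)) hgen
  simp only [map_mul, map_inv] at h2
  have h3 : ((F ⟨gen n ε i, gen_mem i hi⟩ : ↥(GammaEps n ε')) : E n ≃ᵃⁱ[ℝ] E n)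
      * Tz n (transMap hε hε' F lam)
      * ((F ⟨gen n ε i, gen_mem i hi⟩ : ↥(GammaEps n ε')) : E n ≃ᵃⁱ[ℝ] E n)⁻¹
      = ((F ⟨Tz n (fun m => if (m:ℕ) = i then -lam m else lam m), Tz_mem _⟩
          : ↥(GammaEps n ε')) : E n ≃ᵃⁱ[ℝ] E n) := by
    rw [← transMap_spec hε hε' F lam]
    simpa using h2
  rw [← h3, conj_Tz ht hf]

end Equivariance


section Endgame

variable {ε ε' : ℕ → ℕ → ℝ}

lemma shift_congr {t t' : ℕ → ℝ} (ε : ℕ → ℕ → ℝ) (h : ∀ j, j < n → t j = t' j)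
    {m : ℕ} (hm : m < n) : shift n ε t m = shift n ε t' m := by
  unfold shift
  congr 1
  · split
    · rfl
    · rw [h (m-1) (by omega)]
  · apply Finset.sum_congr rfl
    intro j hj
    rw [Finset.mem_Ico] at hj
    rw [h j (by omega)]

theorem eps_eq_of_mulEquiv (hn : 2 ≤ n) (hε : Valid n ε) (hε' : Valid n ε')
    (F : ↥(GammaEps n ε) ≃* ↥(GammaEps n ε')) :
    ∀ j i, j < i → i < n - 1 → ε j i = ε' j i := by
  classical
  choose tt bb hbits hvan hform hshift using
    fun (i : ℕ) (hi : i < n - 1) => isGood_of_mem hε' (F ⟨gen n ε i, gen_mem i hi⟩).2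
  set fF := transMap hε hε' F with hfF
  set gF := transMap hε' hε F.symm with hgF
  have hgFfF : ∀ lam, gF (fF lam) = lam := fun lam => transMap_symm hε hε' F lam
  have hfFgF : ∀ mu, fF (gF mu) = mu := by
    intro mu
    have h1 := transMap_symm hε' hε F.symm mu
    rw [show F.symm.symm = F from MulEquiv.symm_symm F] at h1
    exact h1
  -- equivariance
  have hconj : ∀ (i : ℕ) (hi : i < n - 1) (lam : Fin n → ℤ),
      fF (fun m => if (m:ℕ) = i then -lam m else lam m)
        = fun m : Fin n => if tt i hi (m:ℕ) = 1 then -(fF lam m) else fF lam m :=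
    fun i hi lam => transMap_conj hε hε' F hi (hbits i hi) (hform i hi) lam
  -- P1
  have P1 : ∀ (i : ℕ) (hi : i < n - 1) (m k : Fin n), (m:ℕ) ≠ i →
      tt i hi (k:ℕ) = 1 → fF (fun j => if m = j then 1 else 0) k = 0 := by
    intro i hi m k hmi htk
    have hc : (fun m' : Fin n => if (m':ℕ) = i
          then -(if m = m' then (1:ℤ) else 0) else (if m = m' then 1 else 0))
        = (fun j => if m = j then 1 else 0) := by
      funext k'
      by_cases h : (k':ℕ) = i
      · have hne : ¬ (m = k') := fun he => hmi (by rw [he]; exact h)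
        rw [if_pos h, if_neg hne, neg_zero]
      · rw [if_neg h]
    have h1 := congrFun (hconj i hi (fun j => if m = j then 1 else 0)) k
    rw [hc, if_pos htk] at h1
    omega
  -- P2
  have P2 : ∀ (i : ℕ) (hi : i < n - 1) (m k : Fin n), (m:ℕ) = i →
      tt i hi (k:ℕ) = 0 → fF (fun j => if m = j then 1 else 0) k = 0 := by
    intro i hi m k hmi htk
    have hc : (fun m' : Fin n => if (m':ℕ) = i
          then -(if m = m' then (1:ℤ) else 0) else (if m = m' then 1 else 0))
        = -(fun j : Fin n => if m = j then (1:ℤ) else 0) := by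
      funext k'
      rw [Pi.neg_apply]
      by_cases h : (k':ℕ) = i
      · rw [if_pos h]
      · have hne : ¬ (m = k') := fun he => h (by rw [← he]; exact hmi)
        rw [if_neg h, if_neg hne, neg_zero]
    have hneg : ∀ lam, fF (-lam) = -(fF lam) := fun lam => transMap_neg hε hε' F lam
    have h1 := congrFun (hconj i hi (fun j => if m = j then 1 else 0)) k
    rw [hc] at h1
    rw [hneg] at h1
    rw [if_neg (by rw [htk]; norm_num)] at h1
    have h2 : -(fF (fun j => if m = j then (1:ℤ) else 0) k)
        = fF (fun j => if m = j then 1 else 0) k := h1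
    omega
  -- disjointness of rows
  have disj : ∀ (k m m' : Fin n), m ≠ m' →
      fF (fun j => if m = j then 1 else 0) k ≠ 0 →
      fF (fun j => if m' = j then 1 else 0) k ≠ 0 → False := by
    intro k m m' hne h1 h2
    by_cases hm : (m:ℕ) < n - 1
    · have ht1 : tt (m:ℕ) hm (k:ℕ) = 1 := by
        rcases hbits (m:ℕ) hm (k:ℕ) with h | h
        · exact absurd (P2 (m:ℕ) hm m k rfl h) h1
        · exact h
      exact h2 (P1 (m:ℕ) hm m' k (fun hc => hne (Fin.ext hc).symm) ht1)
    · by_cases hm' : (m':ℕ) < n - 1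
      · have ht1 : tt (m':ℕ) hm' (k:ℕ) = 1 := by
          rcases hbits (m':ℕ) hm' (k:ℕ) with h | h
          · exact absurd (P2 (m':ℕ) hm' m' k rfl h) h2
          · exact h
        exact h1 (P1 (m':ℕ) hm' m k (fun hc => hne (Fin.ext (by omega))) ht1)
      · have e1 : (m:ℕ) = n - 1 := by have := m.isLt; omega
        have e2 : (m':ℕ) = n - 1 := by have := m'.isLt; omega
        exact hne (Fin.ext (by omega))
  -- each column nonzero somewhere
  have col_ex : ∀ m : Fin n, ∃ k, fF (fun j => if m = j then (1:ℤ) else 0) k ≠ 0 := by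
    intro m
    by_contra hc
    push_neg at hc
    have h1 : fF (fun j => if m = j then (1:ℤ) else 0) = 0 := funext hc
    have h2 := hgFfF (fun j => if m = j then (1:ℤ) else 0)
    rw [h1] at h2
    have h3 : gF 0 = 0 := transMap_zero hε' hε F.symm
    rw [h3] at h2
    have h4 := congrFun h2 m
    rw [if_pos rfl] at h4
    exact absurd h4.symm one_ne_zero
  set σ : Fin n → Fin n := fun m => Classical.choose (col_ex m) with hσ
  have hσ1 : ∀ m, fF (fun j => if m = j then (1:ℤ) else 0) (σ m) ≠ 0 :=
    fun m => Classical.choose_spec (col_ex m)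
  -- evaluation at σ-columns
  have eval : ∀ (lam : Fin n → ℤ) (m' : Fin n),
      fF lam (σ m') = lam m' * fF (fun j => if m' = j then 1 else 0) (σ m') := by
    intro lam m'
    rw [hfF, transMap_expand hε hε' F lam (σ m')]
    apply Finset.sum_eq_single
    · intro j _ hj
      have hz : transMap hε hε' F (fun j' => if j = j' then 1 else 0) (σ m') = 0 := by
        by_contra hne
        exact disj (σ m') j m' hj hne (hσ1 m')
      rw [hz, mul_zero]
    · intro hmem
      exact absurd (Finset.mem_univ m') hmem
  -- column uniqueness
  have col_unique : ∀ (m : Fin n) (k : Fin n),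
      fF (fun j => if m = j then (1:ℤ) else 0) k ≠ 0 → k = σ m := by
    intro m k hk
    by_contra hne
    have h1 := eval (gF (fun j => if k = j then (1:ℤ) else 0)) m
    rw [hfFgF] at h1
    have h2 : (if k = σ m then (1:ℤ) else 0) = 0 := by
      rw [if_neg (fun hc => hne hc)]
    rw [h2] at h1
    have h3 : gF (fun j => if k = j then (1:ℤ) else 0) m = 0 := by
      rcases mul_eq_zero.1 h1.symm with h | h
      · exact h
      · exact absurd h (hσ1 m)
    -- now evaluate at k itself
    have h4 := eval (gF (fun j => if k = j then (1:ℤ) else 0)) m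
    -- instead expand at coordinate k directly
    have h5 : fF (gF (fun j => if k = j then (1:ℤ) else 0)) k = 1 := by
      rw [hfFgF, if_pos rfl]
    rw [hfF, transMap_expand hε hε' F _ k] at h5
    have h6 : ∀ j : Fin n, j ≠ m →
        gF (fun j' => if k = j' then (1:ℤ) else 0) j
          * transMap hε hε' F (fun j' => if j = j' then 1 else 0) k = 0 := by
      intro j hj
      have hz : transMap hε hε' F (fun j' => if j = j' then 1 else 0) k = 0 := by
        by_contra hne2
        exact disj k j m hj hne2 hk
      rw [hz, mul_zero]
    rw [Finset.sum_eq_single m (fun j _ hj => h6 j hj)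
      (fun hmem => absurd (Finset.mem_univ m) hmem)] at h5
    rw [h3] at h5
    simp at h5
  have σinj : Function.Injective σ := by
    intro m m' he
    by_contra hne
    exact disj (σ m) m m' hne (hσ1 m) (he ▸ hσ1 m')
  have σbij : Function.Bijective σ := (Finite.injective_iff_bijective).1 σinj
  -- units
  have ηpm : ∀ m : Fin n, fF (fun j => if m = j then (1:ℤ) else 0) (σ m) = 1
      ∨ fF (fun j => if m = j then (1:ℤ) else 0) (σ m) = -1 := by
    intro m
    have h1 := eval (gF (fun j => if (σ m) = j then (1:ℤ) else 0)) m
    rw [hfFgF, if_pos rfl] at h1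
    have h2 : IsUnit (fF (fun j => if m = j then (1:ℤ) else 0) (σ m)) :=
      IsUnit.of_mul_eq_one _ (by rw [mul_comm]; exact h1.symm)
    exact Int.isUnit_iff.1 h2
  -- characterization of the bits
  have char : ∀ (i : ℕ) (hi : i < n - 1) (k : Fin n),
      tt i hi (k:ℕ) = if k = σ ⟨i, by omega⟩ then 1 else 0 := by
    intro i hi k
    by_cases hk : k = σ ⟨i, by omega⟩
    · rw [if_pos hk]
      rcases hbits i hi (k:ℕ) with h | h
      · exfalso
        apply hσ1 (⟨i, by omega⟩ : Fin n)
        rw [← hk]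
        exact P2 i hi ⟨i, by omega⟩ k rfl h
      · exact h
    · rw [if_neg hk]
      rcases hbits i hi (k:ℕ) with h | h
      · exact h
      · exfalso
        obtain ⟨m'', hm''⟩ := σbij.surjective k
        have hne : (m'':ℕ) ≠ i := by
          intro hc
          apply hk
          rw [← hm'']
          congr 1
          exact Fin.ext hc
        apply hσ1 m''
        rw [hm'']
        exact P1 i hi m'' k hne h
  -- σ's image of generators avoids the last coordinate
  have hσtop : ∀ (i : ℕ) (hi : i < n - 1), ((σ ⟨i, by omega⟩ : Fin n):ℕ) < n - 1 := by
    intro i hi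
    by_contra hc
    push_neg at hc
    have h1 := char i hi (σ ⟨i, by omega⟩)
    rw [if_pos rfl] at h1
    rw [hvan i hi _ hc] at h1
    norm_num at h1
  -- the square identity
  have hsq_id : ∀ (i : ℕ) (hi : i < n - 1) (m : Fin n),
      ((fF (fun m' : Fin n => if (m':ℕ) = i+1 then 1
          else if ((m':ℕ) < i ∧ ε (m':ℕ) i = 1/2) then 1 else 0) m : ℤ) : ℝ)
        = (1 - 2 * tt i hi (m:ℕ)) * bb i hi (m:ℕ) + bb i hi (m:ℕ) := by
    intro i hi m
    have h1 : (⟨gen n ε i, gen_mem i hi⟩ : ↥(GammaEps n ε)) * ⟨gen n ε i, gen_mem i hi⟩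
        = ⟨Tz n (fun m' : Fin n => if (m':ℕ) = i+1 then 1
            else if ((m':ℕ) < i ∧ ε (m':ℕ) i = 1/2) then 1 else 0), Tz_mem _⟩ :=
      Subtype.ext (gen_sq hε hi)
    have h2 := congrArg F h1
    rw [map_mul] at h2
    have h2' := congrArg (fun y : ↥(GammaEps n ε') => (y : E n ≃ᵃⁱ[ℝ] E n)) h2
    rw [transMap_spec hε hε' F] at h2'
    have h3 : ((F ⟨gen n ε i, gen_mem i hi⟩ : ↥(GammaEps n ε')) : E n ≃ᵃⁱ[ℝ] E n)
          (((F ⟨gen n ε i, gen_mem i hi⟩ : ↥(GammaEps n ε')) : E n ≃ᵃⁱ[ℝ] E n)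
            (0:E n)) m
        = Tz n (transMap hε hε' F (fun m' : Fin n => if (m':ℕ) = i+1 then 1
            else if ((m':ℕ) < i ∧ ε (m':ℕ) i = 1/2) then 1 else 0)) (0:E n) m := by
      exact congrFun (congrArg
        (fun (γ : E n ≃ᵃⁱ[ℝ] E n) => (γ (0:E n) : Fin n → ℝ)) h2') m
    rw [hform i hi _ m, hform i hi _ m, Tz_apply] at h3
    have h0 : (0 : E n) m = 0 := rfl
    rw [h0] at h3
    linear_combination h3.symm
  -- downward induction: σ = id
  have main : ∀ d : ℕ, ∀ m : Fin n, n - 1 - (m:ℕ) = d → σ m = m := by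
    intro d
    induction d using Nat.strong_induction_on with
    | _ d IH =>
      intro m hm
      by_cases hml : (m:ℕ) = n - 1
      · obtain ⟨m0, hm0⟩ := σbij.surjective m
        by_cases h0 : (m0:ℕ) = n - 1
        · have he : m0 = m := Fin.ext (by omega)
          rwa [he] at hm0
        · have h1 : (m0:ℕ) < n - 1 := by have := m0.isLt; omega
          have h2 := hσtop (m0:ℕ) h1
          have h3 : (⟨(m0:ℕ), by omega⟩ : Fin n) = m0 := Fin.eta m0 m0.isLt
          rw [h3, hm0] at h2
          omega
      · have hi : (m:ℕ) < n - 1 := by have := m.isLt; omega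
        have hfixgt : ∀ k : Fin n, (m:ℕ) < (k:ℕ) → σ k = k := by
          intro k hk
          exact IH (n - 1 - (k:ℕ)) (by have := k.isLt; omega) k rfl
        have hσle : ((σ m:Fin n):ℕ) ≤ (m:ℕ) := by
          by_contra hgt
          push_neg at hgt
          have h1 := hfixgt (σ m) hgt
          have h2 := σinj h1
          rw [h2] at hgt
          omega
        have hm1 : (m:ℕ) + 1 < n := by have := m.isLt; omega
        have hm'fix : σ ⟨(m:ℕ)+1, hm1⟩ = ⟨(m:ℕ)+1, hm1⟩ := hfixgt _ (by simp)
        -- square identity at generator ↑m, coordinate ⟨m+1⟩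
        have hid := hsq_id (m:ℕ) hi ⟨(m:ℕ)+1, hm1⟩
        have hev := eval (fun m' : Fin n => if (m':ℕ) = (m:ℕ)+1 then 1
            else if ((m':ℕ) < (m:ℕ) ∧ ε (m':ℕ) (m:ℕ) = 1/2) then 1 else 0) ⟨(m:ℕ)+1, hm1⟩
        rw [hm'fix] at hev
        have hval : ((⟨(m:ℕ)+1, hm1⟩ : Fin n) : ℕ) = (m:ℕ)+1 := rfl
        rw [if_pos hval, one_mul] at hev
        -- the bit at coordinate m+1 vanishes
        have hmeta : (⟨(m:ℕ), by omega⟩ : Fin n) = m := Fin.eta m m.isLt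
        have htt : tt (m:ℕ) hi ((m:ℕ)+1) = 0 := by
          have h1 := char (m:ℕ) hi ⟨(m:ℕ)+1, hm1⟩
          rw [hmeta] at h1
          rw [if_neg (fun hc : (⟨(m:ℕ)+1, hm1⟩ : Fin n) = σ m => by
            have : ((⟨(m:ℕ)+1, hm1⟩ : Fin n) : ℕ) = ((σ m : Fin n) : ℕ) := congrArg _ hc
            omega)] at h1
          exact h1
        by_cases hcase : ((σ m : Fin n) : ℕ) = (m:ℕ)
        · exact Fin.ext hcase
        · exfalso
          -- bb value
          obtain ⟨k, hk⟩ := hshift (m:ℕ) hi ⟨(m:ℕ)+1, hm1⟩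
          have hσlt : ((σ m : Fin n) : ℕ) < n - 1 := by
            have := hσtop (m:ℕ) hi
            rwa [hmeta] at this
          have hcongr : shift n ε' (tt (m:ℕ) hi) ((m:ℕ)+1)
              = shift n ε' (indic ((σ m : Fin n) : ℕ)) ((m:ℕ)+1) := by
            apply shift_congr ε' _ hm1
            intro j hj
            have h1 := char (m:ℕ) hi ⟨j, hj⟩
            rw [hmeta] at h1
            unfold indic
            rw [h1]
            by_cases h2 : j = ((σ m : Fin n) : ℕ)
            · rw [if_pos h2, if_pos (Fin.ext h2)]
            · rw [if_neg h2, if_neg (fun hc : (⟨j, hj⟩ : Fin n) = σ m =>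
                h2 (congrArg Fin.val hc))]
          have hind : shift n ε' (indic ((σ m : Fin n) : ℕ)) ((m:ℕ)+1) = 0 := by
            rw [shift_indicator ε' hσlt]
            rw [if_neg (by omega : ¬ (m:ℕ)+1 = ((σ m : Fin n) : ℕ) + 1)]
            rw [if_neg (by omega : ¬ (m:ℕ)+1 < ((σ m : Fin n) : ℕ))]
          rw [hval, htt, hk, hval, hcongr, hind] at hid
          rw [hev] at hid
          rcases ηpm ⟨(m:ℕ)+1, hm1⟩ with h | h <;> rw [hm'fix] at h <;> rw [h] at hid
          · have : (1:ℝ) = 2 * k := by push_cast at hid; linarith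
            have h2 : (1:ℤ) = 2 * k := by exact_mod_cast this
            omega
          · have : (-1:ℝ) = 2 * k := by push_cast at hid; linarith
            have h2 : (-1:ℤ) = 2 * k := by exact_mod_cast this
            omega
  have σid : ∀ m : Fin n, σ m = m := fun m => main (n - 1 - (m:ℕ)) m rfl
  -- final extraction of the ε values
  intro j i hji hilt
  have hjn : j < n := by omega
  have hin : i < n := by omega
  have hid := hsq_id i hilt ⟨j, hjn⟩
  have hev := eval (fun m' : Fin n => if (m':ℕ) = i+1 then 1
      else if ((m':ℕ) < i ∧ ε (m':ℕ) i = 1/2) then 1 else 0) ⟨j, hjn⟩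
  rw [σid ⟨j, hjn⟩] at hev
  have hvalj : ((⟨j, hjn⟩ : Fin n) : ℕ) = j := rfl
  rw [if_neg (by omega : ¬ ((⟨j, hjn⟩ : Fin n) : ℕ) = i + 1)] at hev
  have hmeta : (⟨i, by omega⟩ : Fin n) = (⟨i, hin⟩ : Fin n) := rfl
  have htt : tt i hilt j = 0 := by
    have h1 := char i hilt ⟨j, hjn⟩
    have h2 : σ (⟨i, by omega⟩ : Fin n) = (⟨i, by omega⟩ : Fin n) := σid _
    rw [h2] at h1
    rw [if_neg (fun hc : (⟨j, hjn⟩ : Fin n) = (⟨i, by omega⟩ : Fin n) => by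
      have := congrArg Fin.val hc
      simp at this
      omega)] at h1
    exact h1
  obtain ⟨k, hk⟩ := hshift i hilt ⟨j, hjn⟩
  have hcongr : shift n ε' (tt i hilt) j = shift n ε' (indic i) j := by
    apply shift_congr ε' _ hjn
    intro j' hj'
    have h1 := char i hilt ⟨j', hj'⟩
    have h2 : σ (⟨i, by omega⟩ : Fin n) = (⟨i, by omega⟩ : Fin n) := σid _
    rw [h2] at h1
    unfold indic
    rw [h1]
    by_cases h3 : j' = i
    · rw [if_pos (Fin.ext (by simpa using h3)), if_pos h3]
    · rw [if_neg (fun hc : (⟨j', hj'⟩ : Fin n) = (⟨i, by omega⟩ : Fin n) => by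
        have := congrArg Fin.val hc
        simp at this
        exact h3 this), if_neg h3]
  have hind : shift n ε' (indic i) j = ε' j i := by
    rw [shift_indicator ε' hilt]
    rw [if_neg (by omega : ¬ j = i + 1), if_pos hji]
  rw [hvalj, htt, hk, hvalj, hcongr, hind] at hid
  rw [hev] at hid
  rcases hε j i hji hilt with he | he <;> rcases hε' j i hji hilt with he' | he'
  · rw [he, he']
  · exfalso
    rw [if_neg (fun hc : ((⟨j, hjn⟩ : Fin n) : ℕ) < i ∧ ε ((⟨j, hjn⟩ : Fin n) : ℕ) i = 1/2 => by
      rw [hvalj] at hc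
      rw [he] at hc
      norm_num at hc)] at hid
    rw [he'] at hid
    have : (0:ℝ) = 2 * (1/2) + 2 * k := by push_cast at hid; linarith
    have h2 : (0:ℝ) = 1 + 2 * k := by linarith
    have h3 : (2 * k : ℤ) = -1 := by exact_mod_cast (by linarith : (2*k:ℝ) = -1)
    omega
  · exfalso
    rw [if_pos (show ((⟨j, hjn⟩ : Fin n) : ℕ) < i ∧ ε ((⟨j, hjn⟩ : Fin n) : ℕ) i = 1/2 from
      by rw [hvalj]; exact ⟨hji, he⟩)] at hid
    rw [he'] at hid
    rw [one_mul] at hid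
    rcases ηpm ⟨j, hjn⟩ with h | h <;> rw [σid ⟨j, hjn⟩] at h <;> rw [h] at hid
    · have h3 : (2 * k : ℤ) = 1 := by
        exact_mod_cast (by push_cast at hid; linarith : (2*k:ℝ) = 1)
      omega
    · have h3 : (2 * k : ℤ) = -1 := by
        exact_mod_cast (by push_cast at hid; linarith : (2*k:ℝ) = -1)
      omega
  · rw [he, he']

end Endgame


section Assembly

variable {ε ε' : ℕ → ℕ → ℝ}

lemma gamma_congr (h : ∀ j i, j < i → i < n - 1 → ε j i = ε' j i) :
    GammaEps n ε = GammaEps n ε' := by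
  have hc : ∀ i, i < n - 1 → cvec n ε i = cvec n ε' i := by
    intro i hi
    funext m
    unfold cvec
    by_cases h1 : (m:ℕ) = i + 1
    · rw [if_pos h1, if_pos h1]
    · rw [if_neg h1, if_neg h1]
      by_cases h2 : (m:ℕ) < i
      · rw [if_pos h2, if_pos h2, h (m:ℕ) i h2 hi]
      · rw [if_neg h2, if_neg h2]
  unfold GammaEps
  congr 1
  unfold gammaEpsSet
  ext γ
  constructor
  · rintro (⟨i, hi, hf⟩ | h1)
    · exact Or.inl ⟨i, hi, by rw [← hc i hi]; exact hf⟩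
    · exact Or.inr h1
  · rintro (⟨i, hi, hf⟩ | h1)
    · exact Or.inl ⟨i, hi, by rw [hc i hi]; exact hf⟩
    · exact Or.inr h1

end Assembly

end GammaFam

open GammaFam in
/-- There is a family of exactly `2^{(n−1)(n−2)/2}` subgroups of the affine isometry group
of `ℝ^n`, each of the form `Γ(ε)` for parameters `ε` with entries in `{0, 1/2}` (and every
such `Γ(ε)` occurs), all torsion-free and pairwise non-isomorphic as abstract groups. -/
theorem gammaEps_family (n : ℕ) (hn : 2 ≤ n) :
    ∃ S : Finset (Subgroup (EuclideanSpace ℝ (Fin n) ≃ᵃⁱ[ℝ] EuclideanSpace ℝ (Fin n))),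
      S.card = 2 ^ ((n - 1) * (n - 2) / 2) ∧
      (∀ H ∈ S, ∃ ε : ℕ → ℕ → ℝ,
        (∀ j i, j < i → i < n - 1 → ε j i = 0 ∨ ε j i = 1 / 2) ∧ H = GammaEps n ε) ∧
      (∀ ε : ℕ → ℕ → ℝ, (∀ j i, j < i → i < n - 1 → ε j i = 0 ∨ ε j i = 1 / 2) →
        GammaEps n ε ∈ S) ∧
      (∀ H ∈ S, ∀ γ : H, γ ≠ 1 → ¬IsOfFinOrder γ) ∧
      (∀ H ∈ S, ∀ H' ∈ S, H ≠ H' → IsEmpty (H ≃* H')) := by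
  classical
  set Idx := Σ i : Fin (n-1), Fin (i:ℕ) with hIdx
  set εOf : (Idx → Bool) → (ℕ → ℕ → ℝ) := fun f j i =>
    if h : j < i ∧ i < n - 1 then (if f ⟨⟨i, h.2⟩, ⟨j, h.1⟩⟩ then 1/2 else 0) else 0 with hεOf
  have hvalid : ∀ f : Idx → Bool, Valid n (εOf f) := by
    intro f j i hji hilt
    rw [hεOf]
    beta_reduce
    rw [dif_pos ⟨hji, hilt⟩]
    split
    · exact Or.inr rfl
    · exact Or.inl rfl
  have hεOfval : ∀ (f : Idx → Bool) (j i : ℕ) (h1 : j < i) (h2 : i < n - 1),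
      εOf f j i = if f ⟨⟨i, h2⟩, ⟨j, h1⟩⟩ then 1/2 else 0 := by
    intro f j i h1 h2
    rw [hεOf]
    beta_reduce
    rw [dif_pos ⟨h1, h2⟩]
  set S : Finset (Subgroup (EuclideanSpace ℝ (Fin n) ≃ᵃⁱ[ℝ] EuclideanSpace ℝ (Fin n))) :=
    Finset.image (fun f : Idx → Bool => GammaEps n (εOf f)) Finset.univ with hS
  have hinj : Function.Injective (fun f : Idx → Bool => GammaEps n (εOf f)) := by
    intro f f' he
    simp only at he
    have hF : ↥(GammaEps n (εOf f)) ≃* ↥(GammaEps n (εOf f')) :=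
      MulEquiv.subgroupCongr he
    have hagree := eps_eq_of_mulEquiv hn (hvalid f) (hvalid f') hF
    funext p
    obtain ⟨i, j⟩ := p
    have h1 : (j:ℕ) < (i:ℕ) := j.isLt
    have h2 : (i:ℕ) < n - 1 := i.isLt
    have h3 := hagree (j:ℕ) (i:ℕ) h1 h2
    rw [hεOfval f _ _ h1 h2, hεOfval f' _ _ h1 h2] at h3
    have hidx : (⟨⟨(i:ℕ), h2⟩, ⟨(j:ℕ), h1⟩⟩ : Idx) = ⟨i, j⟩ := rfl
    rw [hidx] at h3
    by_cases hb : f ⟨i, j⟩ <;> by_cases hb' : f' ⟨i, j⟩ <;>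
      simp [hb, hb'] at h3 ⊢ <;> norm_num at h3
  have hcardIdx : Fintype.card Idx = (n - 1) * (n - 2) / 2 := by
    show Fintype.card ((i : Fin (n - 1)) × Fin (i:ℕ)) = (n - 1) * (n - 2) / 2
    rw [Fintype.card_sigma]
    simp only [Fintype.card_fin]
    rw [Fin.sum_univ_eq_sum_range (fun i => i) (n-1)]
    rw [Finset.sum_range_id]
    have h2 : n - 1 - 1 = n - 2 := by omega
    rw [h2]
  refine ⟨S, ?_, ?_, ?_, ?_, ?_⟩
  · rw [hS, Finset.card_image_of_injective _ hinj, Finset.card_univ, Fintype.card_fun,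
      Fintype.card_bool, hcardIdx]
  · intro H hH
    rw [hS, Finset.mem_image] at hH
    obtain ⟨f, _, hf⟩ := hH
    exact ⟨εOf f, hvalid f, hf.symm⟩
  · intro ε hε
    rw [hS, Finset.mem_image]
    refine ⟨fun p : Idx => decide (ε (p.2 : ℕ) (p.1 : ℕ) = 1/2), Finset.mem_univ _, ?_⟩
    apply (gamma_congr _).symm
    intro j i hji hilt
    rw [hεOf]
    beta_reduce
    rw [dif_pos (⟨hji, hilt⟩ : j < i ∧ i < n - 1)]
    rcases hε j i hji hilt with h | h
    · have h2 : ¬ (ε j i = 1/2) := by rw [h]; norm_num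
      simp [h, h2]
    · simp [h]
  · intro H hH γ hγ
    rw [hS, Finset.mem_image] at hH
    obtain ⟨f, _, hf⟩ := hH
    subst hf
    exact gamma_torsionfree_sub (hvalid f) γ hγ
  · intro H hH H' hH' hne
    rw [hS, Finset.mem_image] at hH hH'
    obtain ⟨f, _, hf⟩ := hH
    obtain ⟨f', _, hf'⟩ := hH'
    subst hf
    subst hf'
    constructor
    intro e
    apply hne
    exact gamma_congr (eps_eq_of_mulEquiv hn (hvalid f) (hvalid f') e)
end

section
/- Let n ≥ 3 be odd and let F be the group of all diagonal n×n real matrices with diagonal entries ±1 and determinant 1. Then for every 1 ≤ p ≤ n−1, the subspace of the p-th exterior power ⋀^p(ℝ^n) fixed pointwise by the induced maps ⋀^p B for all B ∈ F is the zero subspace. -/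
open ExteriorAlgebra

section Aux

open Finset

private lemma char_sum {n p : ℕ} (s : Fin p → Fin n) (hs : Function.Injective s)
    (hp1 : 1 ≤ p) (hpn : p < n) :
    ∑ S ∈ Finset.univ.filter (fun S : Finset (Fin n) => Even S.card),
      ∏ i : Fin p, (if s i ∈ S then (-1:ℝ) else 1) = 0 := by
  classical
  set T : Finset (Fin n) := Finset.image s Finset.univ with hT
  set x : Fin n → ℝ := fun j => if j ∈ T then -1 else 1 with hx
  set F : Finset (Fin n) → ℝ := fun S => ∏ j : Fin n, (if j ∈ S then x j else 1) with hF
  -- step 1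
  have step1 : ∀ S : Finset (Fin n),
      (∏ i : Fin p, (if s i ∈ S then (-1:ℝ) else 1)) = F S := by
    intro S
    have h1 : (∏ i : Fin p, (if s i ∈ S then (-1:ℝ) else 1))
        = ∏ j ∈ T, (if j ∈ S then (-1:ℝ) else 1) := by
      rw [hT, Finset.prod_image (fun a _ b _ h => hs h)]
    rw [h1, hF]
    simp only []
    rw [← Finset.prod_subset (Finset.subset_univ T)
      (fun j _ hj => by simp only [hx]; rw [if_neg hj]; split <;> rfl)]
    refine Finset.prod_congr rfl fun j hj => ?_
    simp only [hx]
    rw [if_pos hj]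
  -- sum over all subsets
  have sumall : ∀ y : Fin n → ℝ,
      ∑ S : Finset (Fin n), ∏ j : Fin n, (if j ∈ S then y j else 1) = ∏ j : Fin n, (y j + 1) := by
    intro y
    rw [Finset.prod_add, Finset.powerset_univ]
    refine Finset.sum_congr rfl fun S _ => ?_
    rw [Finset.prod_ite_mem, Finset.univ_inter, Finset.prod_const_one, mul_one]
  -- exists elements in and out of T
  obtain ⟨a, ha⟩ : ∃ a, a ∈ T := ⟨s ⟨0, hp1⟩, Finset.mem_image_of_mem _ (Finset.mem_univ _)⟩
  obtain ⟨b, hb⟩ : ∃ b, b ∉ T := by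
    by_contra h
    push_neg at h
    have : T = Finset.univ := Finset.eq_univ_of_forall h
    have hcard : T.card = n := by rw [this, Finset.card_univ, Fintype.card_fin]
    have : T.card = p := by rw [hT, Finset.card_image_of_injective _ hs, Finset.card_univ,
      Fintype.card_fin]
    omega
  have hA : ∑ S : Finset (Fin n), F S = 0 := by
    rw [hF]; rw [sumall x]
    exact Finset.prod_eq_zero (Finset.mem_univ a) (by simp [hx, ha])
  have hB : ∑ S : Finset (Fin n), F S * (-1 : ℝ) ^ S.card = 0 := by
    have : ∀ S : Finset (Fin n), F S * (-1:ℝ)^S.card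
        = ∏ j : Fin n, (if j ∈ S then -x j else 1) := by
      intro S
      have hpow : ((-1:ℝ))^S.card = ∏ j : Fin n, (if j ∈ S then (-1:ℝ) else 1) := by
        rw [Finset.prod_ite_mem, Finset.univ_inter, Finset.prod_const]
      rw [hF, hpow, ← Finset.prod_mul_distrib]
      refine Finset.prod_congr rfl fun j _ => ?_
      split <;> ring
    rw [Finset.sum_congr rfl fun S _ => this S, sumall (fun j => -x j)]
    exact Finset.prod_eq_zero (Finset.mem_univ b) (by simp [hx, hb])
  have key : (2:ℝ) * ∑ S ∈ Finset.univ.filter (fun S : Finset (Fin n) => Even S.card), F S = 0 := by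
    have split : ∑ S : Finset (Fin n), F S * (1 + (-1:ℝ)^S.card)
        = ∑ S ∈ Finset.univ.filter (fun S : Finset (Fin n) => Even S.card), F S * (1 + (-1:ℝ)^S.card)
        + ∑ S ∈ Finset.univ.filter (fun S : Finset (Fin n) => ¬ Even S.card), F S * (1 + (-1:ℝ)^S.card) :=
      (Finset.sum_filter_add_sum_filter_not _ _ _).symm
    have e1 : ∑ S ∈ Finset.univ.filter (fun S : Finset (Fin n) => Even S.card), F S * (1 + (-1:ℝ)^S.card)
        = 2 * ∑ S ∈ Finset.univ.filter (fun S : Finset (Fin n) => Even S.card), F S := by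
      rw [Finset.mul_sum]
      refine Finset.sum_congr rfl fun S hS => ?_
      have : Even S.card := (Finset.mem_filter.1 hS).2
      rw [this.neg_one_pow]; ring
    have e2 : ∑ S ∈ Finset.univ.filter (fun S : Finset (Fin n) => ¬ Even S.card), F S * (1 + (-1:ℝ)^S.card) = 0 := by
      refine Finset.sum_eq_zero fun S hS => ?_
      have : Odd S.card := Nat.not_even_iff_odd.1 (Finset.mem_filter.1 hS).2
      rw [this.neg_one_pow]; ring
    have lhs : ∑ S : Finset (Fin n), F S * (1 + (-1:ℝ)^S.card)
        = ∑ S : Finset (Fin n), F S + ∑ S : Finset (Fin n), F S * (-1:ℝ)^S.card := by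
      rw [← Finset.sum_add_distrib]
      refine Finset.sum_congr rfl fun S _ => by ring
    rw [e1, e2, add_zero] at split
    rw [lhs, hA, hB] at split
    linarith
  have := mul_eq_zero.1 key
  rcases this with h | h
  · norm_num at h
  · rw [Finset.sum_congr rfl fun S _ => step1 S]
    exact h

private lemma diag_single {n : ℕ} (d : Fin n → ℝ) (j : Fin n) :
    Matrix.toLin' (Matrix.diagonal d) (Pi.single j (1:ℝ) : Fin n → ℝ)
      = d j • (Pi.single j (1:ℝ) : Fin n → ℝ) := by
  ext i
  simp [Matrix.toLin'_apply, Matrix.mulVec_single, Matrix.diagonal_apply, Pi.single_apply]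

end Aux

/-- The linear map induced on the `p`-th exterior power `⋀^p M` by a linear endomorphism
`f` of `M`. -/
noncomputable def exteriorPowerMap {R M : Type*} [CommRing R] [AddCommGroup M] [Module R M]
    (p : ℕ) (f : M →ₗ[R] M) : ⋀[R]^p M →ₗ[R] ⋀[R]^p M :=
  (ExteriorAlgebra.map f).toLinearMap.restrict (p := ⋀[R]^p M) (q := ⋀[R]^p M)
    (fun x hx => by
      have h : Submodule.map (ExteriorAlgebra.map f).toLinearMap (⋀[R]^p M) ≤ ⋀[R]^p M := by
        rw [exteriorPower, Submodule.map_pow, ι_range_map_map]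
        refine pow_le_pow_left' ?_ p
        rw [← Submodule.map_top (ι R (M := M))]
        exact Submodule.map_mono le_top
      exact h (Submodule.mem_map_of_mem hx))

/-- Let `n ≥ 3` be odd and `1 ≤ p ≤ n−1`. If `v ∈ ⋀^p(ℝ^n)` is fixed by `⋀^p B` for every
diagonal matrix `B` with entries `±1` and determinant `1`, then `v = 0`. -/
theorem fixed_exteriorPower_diagonal_eq_zero (n : ℕ) (hn : 3 ≤ n) (hodd : Odd n)
    (p : ℕ) (hp1 : 1 ≤ p) (hp2 : p ≤ n - 1) (v : ⋀[ℝ]^p (Fin n → ℝ))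
    (hv : ∀ d : Fin n → ℝ, (∀ i, d i = 1 ∨ d i = -1) → (∏ i, d i) = 1 →
      exteriorPowerMap p (Matrix.toLin' (Matrix.diagonal d)) v = v) :
    v = 0 := by
  classical
  set e : Fin n → (Fin n → ℝ) := fun j => Pi.single j 1 with he
  set dd : Finset (Fin n) → (Fin n → ℝ) := fun S j => if j ∈ S then -1 else 1 with hdd
  set E : Finset (Finset (Fin n)) := Finset.univ.filter (fun S => Even S.card) with hE
  set L : ExteriorAlgebra ℝ (Fin n → ℝ) →ₗ[ℝ] ExteriorAlgebra ℝ (Fin n → ℝ) :=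
    ∑ S ∈ E, (ExteriorAlgebra.map (Matrix.toLin' (Matrix.diagonal (dd S)))).toLinearMap with hL
  -- L fixes v.val up to counting
  have hval : ∀ S ∈ E, ExteriorAlgebra.map (Matrix.toLin' (Matrix.diagonal (dd S)))
      (v : ExteriorAlgebra ℝ (Fin n → ℝ)) = (v : ExteriorAlgebra ℝ (Fin n → ℝ)) := by
    intro S hS
    have h1 : ∀ i, dd S i = 1 ∨ dd S i = -1 := by
      intro i; simp only [hdd]; split
      · exact Or.inr rfl
      · exact Or.inl rfl
    have h2 : (∏ i, dd S i) = 1 := by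
      simp only [hdd]
      rw [Finset.prod_ite_mem, Finset.univ_inter, Finset.prod_const]
      exact ((Finset.mem_filter.1 hS).2).neg_one_pow
    have := hv (dd S) h1 h2
    have := congrArg Subtype.val this
    rwa [exteriorPowerMap, LinearMap.restrict_coe_apply] at this
  have hLv : L (v : ExteriorAlgebra ℝ (Fin n → ℝ)) = E.card • (v : ExteriorAlgebra ℝ (Fin n → ℝ)) := by
    rw [hL, LinearMap.sum_apply]
    simp only [AlgHom.toLinearMap_apply]
    rw [Finset.sum_congr rfl (fun S hS => hval S hS)]
    rw [Finset.sum_const]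
  -- key: L kills basis wedges
  have hkey : ∀ s : Fin p → Fin n, L (ιMulti ℝ p (fun i => e (s i))) = 0 := by
    intro s
    have hmap : ∀ S : Finset (Fin n),
        ExteriorAlgebra.map (Matrix.toLin' (Matrix.diagonal (dd S))) (ιMulti ℝ p (fun i => e (s i)))
          = (∏ i : Fin p, dd S (s i)) • ιMulti ℝ p (fun i => e (s i)) := by
      intro S
      rw [map_apply_ιMulti]
      have : (Matrix.toLin' (Matrix.diagonal (dd S))) ∘ (fun i => e (s i))
          = fun i => dd S (s i) • e (s i) := by
        funext i
        exact diag_single (dd S) (s i)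
      rw [this]
      exact (ιMulti ℝ p).toMultilinearMap.map_smul_univ (fun i => dd S (s i)) (fun i => e (s i))
    rw [hL, LinearMap.sum_apply]
    simp only [AlgHom.toLinearMap_apply]
    rw [Finset.sum_congr rfl (fun S _ => hmap S), ← Finset.sum_smul]
    by_cases hinj : Function.Injective s
    · have hpn : p < n := by omega
      have := char_sum s hinj hp1 hpn
      simp only [hdd]
      rw [hE]
      rw [this, zero_smul]
    · have : ¬ Function.Injective (fun i => e (s i)) := by
        intro h
        rw [Function.not_injective_iff] at hinj
        obtain ⟨a, b, hab, hne⟩ := hinj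
        exact hne (h (by simp [hab]))
      rw [(ιMulti ℝ p).map_eq_zero_of_not_injective _ this, smul_zero]
  -- L kills all of ⋀^p
  have hker : (⋀[ℝ]^p (Fin n → ℝ) : Submodule ℝ _) ≤ LinearMap.ker L := by
    rw [← ιMulti_span_fixedDegree]
    rw [Submodule.span_le]
    rintro _ ⟨m, rfl⟩
    rw [SetLike.mem_coe, LinearMap.mem_ker]
    have hm : (ιMulti ℝ p m : ExteriorAlgebra ℝ (Fin n → ℝ))
        = ∑ s : Fin p → Fin n, (∏ i, m i (s i)) • ιMulti ℝ p (fun i => e (s i)) := by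
      have hexp : m = fun i => ∑ j, m i j • e j := by
        funext i
        rw [he]
        simp only [← Pi.single_smul, smul_eq_mul, mul_one]
        exact (Finset.univ_sum_single (m i)).symm
      conv_lhs => rw [hexp]
      rw [show (ιMulti ℝ p) (fun i => ∑ j, m i j • e j)
          = (ιMulti ℝ p).toMultilinearMap (fun i => ∑ j, m i j • e j) from rfl]
      rw [MultilinearMap.map_sum]
      refine Finset.sum_congr rfl fun s _ => ?_
      exact (ιMulti ℝ p).toMultilinearMap.map_smul_univ (fun i => m i (s i)) (fun i => e (s i))
    rw [hm, map_sum]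
    refine Finset.sum_eq_zero fun s _ => ?_
    rw [map_smul, hkey s, smul_zero]
  have hLv0 : L (v : ExteriorAlgebra ℝ (Fin n → ℝ)) = 0 := hker v.2
  rw [hLv0] at hLv
  have hEne : E.card ≠ 0 :=
    Finset.card_ne_zero.2 ⟨∅, by simp [hE]⟩
  have : (v : ExteriorAlgebra ℝ (Fin n → ℝ)) = 0 := by
    have := hLv.symm
    rw [← Nat.cast_smul_eq_nsmul ℝ] at this
    rcases smul_eq_zero.1 this with h | h
    · exact absurd (Nat.cast_eq_zero.1 h) hEne
    · exact h
  exact Subtype.ext this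
end
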